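/- Let f : W → V be an injective linear map between finite-dimensional real vector spaces and let P ⊆ V be a polytope. If G is a nonempty face of the polytope f⁻¹(P), then there exists a face F of P such that G = f⁻¹(F). -/

import Mathlib

/-!
Write `G = f⁻¹(P) ∩ {g = α}` with `g ≤ α` on `f⁻¹(P)`. It suffices to extend `g` to a functional
`H` on `V` with `H ≤ α` on `P`, for then `F = P ∩ {H = α}`. The extensions of `g` are
`g ∘ f' + ψ ∘ π` with `f'` a left inverse of `f`, `π : V → V ⧸ f(W)` and `ψ` arbitrary, so the
requirement is a finite system of linear inequalities in `ψ`, one per vertex of `P`. By Farkas'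
lemma it is solvable: a nonnegative combination of vertices lying in `f(W)` is, after
normalisation, a point of `P ∩ f(W)`, where `g ≤ α`.
-/

open Set

variable {W V : Type*} [AddCommGroup W] [Module ℝ W] [AddCommGroup V] [Module ℝ V]

/-- A polytope is the convex hull of finitely many points. -/
def IsPolytope (P : Set V) : Prop :=
  ∃ s : Finset V, P = convexHull ℝ (s : Set V)

/-- `F` is a face of the polytope `P`. -/
def IsFaceOf (P F : Set V) : Prop :=
  F = P ∨ ∃ f : V →ₗ[ℝ] ℝ, f ≠ 0 ∧ ∃ α : ℝ,
    (∀ x ∈ P, f x ≤ α) ∧ F = P ∩ {x | f x = α}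

open Finset Module

theorem exists_le_and_le_of_forall_le {α : Type*} [LinearOrder α] [Nonempty α] {L U : Finset α}
    (h : ∀ a ∈ L, ∀ b ∈ U, a ≤ b) : ∃ s, (∀ a ∈ L, a ≤ s) ∧ ∀ b ∈ U, s ≤ b := by
  rcases U.eq_empty_or_nonempty with rfl | hU
  · obtain ⟨s, hs⟩ := L.exists_le
    exact ⟨s, hs, by simp⟩
  · exact ⟨U.min' hU, fun a ha => U.le_min' hU a (h a ha), fun b hb => U.min'_le b hb⟩

namespace FourierMotzkin

variable {ι : Type*} [DecidableEq ι] (t : ι → ℝ)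

abbrev Index : Type _ := {i // t i = 0} ⊕ {ij : ι × ι // 0 < t ij.1 ∧ t ij.2 < 0}

/-- The rows of the system obtained by eliminating the unknown whose coefficients are `t`: the rows
with `t i = 0`, and `t i • row j - t j • row i` for every pair with `t i > 0 > t j`. -/
noncomputable def weight : Index t → ι → ℝ
  | .inl i => Pi.single i 1
  | .inr ij => t ij.1.1 • Pi.single ij.1.2 1 - t ij.1.2 • Pi.single ij.1.1 1

theorem weight_nonneg (m : Index t) (k : ι) : 0 ≤ weight t m k := by
  rcases m with ⟨i, -⟩ | ⟨⟨i, j⟩, hi, hj⟩ <;>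
    simp only [weight, Pi.single_apply, Pi.sub_apply, Pi.smul_apply, smul_eq_mul] <;>
    split_ifs <;> nlinarith

variable {t} [Fintype ι]

theorem sum_weight_inl_mul (i : {i // t i = 0}) (a : ι → ℝ) :
    ∑ k, weight t (.inl i) k * a k = a i := by
  simp [weight, Pi.single_apply]

theorem sum_weight_inr_mul (ij : {ij : ι × ι // 0 < t ij.1 ∧ t ij.2 < 0}) (a : ι → ℝ) :
    ∑ k, weight t (.inr ij) k * a k = t ij.1.1 * a ij.1.2 - t ij.1.2 * a ij.1.1 := by
  simp [weight, Pi.single_apply, sub_mul, sum_sub_distrib]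

theorem sum_weight_mul_self (m : Index t) : ∑ k, weight t m k * t k = 0 := by
  rcases m with i | ij
  · simpa [sum_weight_inl_mul] using i.2
  · rw [sum_weight_inr_mul]; ring

theorem exists_mul_le {a : ι → ℝ} (h : ∀ m, 0 ≤ ∑ k, weight t m k * a k) :
    ∃ s, ∀ i, s * t i ≤ a i := by
  have hpair : ∀ i j, 0 < t i → t j < 0 → a j / t j ≤ a i / t i := fun i j hi hj => by
    have := h (.inr ⟨(i, j), hi, hj⟩)
    rw [sum_weight_inr_mul] at this
    rw [div_le_iff_of_neg hj, div_mul_eq_mul_div, div_le_iff₀ hi]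
    linarith
  obtain ⟨s, hlow, hup⟩ := exists_le_and_le_of_forall_le
    (L := (univ.filter (t · < 0)).image (a / t)) (U := (univ.filter (0 < t ·)).image (a / t))
    (by simpa using fun j hj i hi => hpair i j hi hj)
  refine ⟨s, fun i => ?_⟩
  rcases lt_trichotomy (t i) 0 with hi | hi | hi
  · have := hlow _ (mem_image_of_mem _ (by simpa using hi))
    rwa [Pi.div_apply, div_le_iff_of_neg hi] at this
  · simpa [hi, sum_weight_inl_mul] using h (.inl ⟨i, hi⟩)
  · have := hup _ (mem_image_of_mem _ (by simpa using hi))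
    rwa [Pi.div_apply, le_div_iff₀ hi] at this

end FourierMotzkin

section Farkas

variable {ι κ M : Type*} [Fintype ι] [AddCommGroup M] [Module ℝ M]

/-- The system `y (p i) ≤ c i` in the unknown `y` has no Farkas certificate of infeasibility. -/
def NoFarkasCertificate (p : ι → M) (c : ι → ℝ) : Prop :=
  ∀ l : ι → ℝ, (∀ i, 0 ≤ l i) → ∑ i, l i • p i = 0 → 0 ≤ ∑ i, l i * c i

variable {p : ι → M} {c : ι → ℝ}

theorem NoFarkasCertificate.combine [Fintype κ] (h : NoFarkasCertificate p c) {w : κ → ι → ℝ}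
    (hw : ∀ m k, 0 ≤ w m k) :
    NoFarkasCertificate (fun m => ∑ k, w m k • p k) (fun m => ∑ k, w m k * c k) := by
  intro l hl hsum
  have key := h (fun k => ∑ m, l m * w m k)
    (fun k => sum_nonneg fun m _ => mul_nonneg (hl m) (hw m k))
  simp only [sum_smul, sum_mul, smul_sum, mul_sum, mul_smul, mul_assoc] at key hsum ⊢
  rw [sum_comm]
  exact key (by rw [sum_comm]; exact hsum)

theorem NoFarkasCertificate.mkQ_span_singleton {τ : Dual ℝ M} {e : M} (he : τ e = 1)
    (hp : ∀ i, τ (p i) = 0) (h : NoFarkasCertificate p c) :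
    NoFarkasCertificate (fun i => (ℝ ∙ e).mkQ (p i)) c := by
  intro l hl hsum
  refine h l hl ?_
  have hmem : ∑ i, l i • p i ∈ ℝ ∙ e := by
    rw [← Submodule.ker_mkQ (ℝ ∙ e), LinearMap.mem_ker, map_sum]
    simp only [map_smul]
    exact hsum
  obtain ⟨r, hr⟩ := Submodule.mem_span_singleton.mp hmem
  have hr0 : r = 0 := by simpa [he, hp] using congrArg τ hr
  rw [← hr, hr0, zero_smul]

theorem NoFarkasCertificate.exists_dual [FiniteDimensional ℝ M] (h : NoFarkasCertificate p c) :
    ∃ y : Dual ℝ M, ∀ i, y (p i) ≤ c i := by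
  classical
  obtain ⟨n, hn⟩ : ∃ n, finrank ℝ M = n := ⟨_, rfl⟩
  induction n generalizing M ι with
  | zero =>
    have : Subsingleton M := finrank_zero_iff.mp hn
    refine ⟨0, fun i => ?_⟩
    simpa [Pi.single_apply, Subsingleton.elim _ (0 : M)] using
      h (Pi.single i 1) (fun k => by rw [Pi.single_apply]; split_ifs <;> norm_num)
  | succ n ih =>
    let b := finBasisOfFinrankEq ℝ M hn
    let τ := b.coord 0
    let π := (ℝ ∙ b 0).mkQ
    let w := FourierMotzkin.weight fun i => τ (p i)
    have hτ : τ (b 0) = 1 := by simp [τ]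
    have hrows : NoFarkasCertificate (fun m => π (∑ k, w m k • p k)) (fun m => ∑ k, w m k * c k) :=
      (h.combine (FourierMotzkin.weight_nonneg _)).mkQ_span_singleton hτ fun m => by
        simpa [map_sum] using FourierMotzkin.sum_weight_mul_self m
    have hrank : finrank ℝ (M ⧸ ℝ ∙ b 0) = n := by
      have := (ℝ ∙ b 0).finrank_quotient_add_finrank
      rw [finrank_span_singleton (b.ne_zero 0)] at this
      omega
    obtain ⟨y', hy'⟩ := ih hrows hrank
    obtain ⟨s, hs⟩ := FourierMotzkin.exists_mul_le (a := fun i => c i - y' (π (p i))) fun m => by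
      have := hy' m
      simp only [map_sum, map_smul, smul_eq_mul, mul_sub, sum_sub_distrib] at this ⊢
      linarith
    refine ⟨y' ∘ₗ π + s • τ, fun i => ?_⟩
    have := hs i
    simp only [LinearMap.add_apply, LinearMap.comp_apply, LinearMap.smul_apply, smul_eq_mul]
      at this ⊢
    linarith

end Farkas

theorem noFarkasCertificate_mkQ_range {s : Finset V} {f : W →ₗ[ℝ] V} {f' : V →ₗ[ℝ] W}
    (hf'f : ∀ w, f' (f w) = w) {g : W →ₗ[ℝ] ℝ} {α : ℝ}
    (hg : ∀ w, f w ∈ convexHull ℝ (s : Set V) → g w ≤ α) :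
    NoFarkasCertificate (fun v : s => (LinearMap.range f).mkQ v) (fun v => α - g (f' v)) := by
  intro l hl hsum
  obtain ⟨w, hw⟩ : ∃ w, f w = ∑ v, l v • (v : V) := by
    rw [← LinearMap.mem_range, ← Submodule.ker_mkQ (LinearMap.range f), LinearMap.mem_ker, map_sum]
    simpa only [map_smul] using hsum
  have hsum_eq : ∑ v, l v * (α - g (f' v)) = (∑ v, l v) * α - g w := by
    rw [← hf'f w, hw]
    simp only [mul_sub, sum_sub_distrib, sum_mul, map_sum, map_smul, smul_eq_mul]
  rw [hsum_eq, sub_nonneg]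
  rcases (sum_nonneg fun v _ => hl v).eq_or_lt with hΛ | hΛ
  · have hl0 : ∀ v, l v = 0 := fun v =>
      (sum_eq_zero_iff_of_nonneg fun v _ => hl v).mp hΛ.symm v (mem_univ v)
    have hw0 : w = 0 := by rw [← hf'f w, hw]; simp [hl0]
    rw [hw0, ← hΛ]
    simp
  · have hmem : f ((∑ v, l v)⁻¹ • w) ∈ convexHull ℝ (s : Set V) := by
      rw [map_smul, hw]
      exact centerMass_mem_convexHull _ (fun v _ => hl v) hΛ fun v _ => v.2
    have := hg _ hmem
    rw [map_smul, smul_eq_mul, inv_mul_le_iff₀ hΛ] at this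
    linarith

theorem IsPolytope.exists_extension_le [FiniteDimensional ℝ V] {P : Set V} (hP : IsPolytope P)
    {f : W →ₗ[ℝ] V} (hf : Function.Injective f) {g : W →ₗ[ℝ] ℝ} {α : ℝ}
    (hg : ∀ w ∈ f ⁻¹' P, g w ≤ α) : ∃ H : Dual ℝ V, H ∘ₗ f = g ∧ ∀ x ∈ P, H x ≤ α := by
  obtain ⟨s, rfl⟩ := hP
  obtain ⟨f', hf'⟩ := f.exists_leftInverse_of_injective (LinearMap.ker_eq_bot.mpr hf)
  have hf'f : ∀ w, f' (f w) = w := LinearMap.congr_fun hf'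
  obtain ⟨ψ, hψ⟩ := (noFarkasCertificate_mkQ_range hf'f hg).exists_dual
  refine ⟨g ∘ₗ f' + ψ ∘ₗ (LinearMap.range f).mkQ, ?_, fun x hx =>
    convexHull_min ?_ (convex_halfSpace_le (LinearMap.isLinear _) α) hx⟩
  · ext w
    simp [hf'f, (Submodule.Quotient.mk_eq_zero _).mpr (LinearMap.mem_range_self f w)]
  · intro v hv
    have := hψ ⟨v, hv⟩
    show (g ∘ₗ f' + ψ ∘ₗ (LinearMap.range f).mkQ) v ≤ α
    simp only [LinearMap.add_apply, LinearMap.comp_apply] at this ⊢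
    linarith

theorem face_of_preimage_general [FiniteDimensional ℝ V]
    (f : W →ₗ[ℝ] V) (hf : Function.Injective f) {P : Set V} (hP : IsPolytope P)
    {G : Set W} (hG : IsFaceOf (f ⁻¹' P) G) :
    ∃ F : Set V, IsFaceOf P F ∧ G = f ⁻¹' F := by
  rcases hG with rfl | ⟨g, hg0, α, hle, rfl⟩
  · exact ⟨P, Or.inl rfl, rfl⟩
  obtain ⟨H, rfl, hH⟩ := hP.exists_extension_le hf hle
  exact ⟨P ∩ {x | H x = α}, Or.inr ⟨H, fun h => hg0 (by simp [h]), α, hH, rfl⟩, rfl⟩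

/-- If `f : W → V` is an injective linear map, `P ⊆ V` a polytope and `G` a
nonempty face of `f⁻¹(P)`, then `G = f⁻¹(F)` for some face `F` of `P`. -/
theorem face_of_preimage [FiniteDimensional ℝ W] [FiniteDimensional ℝ V]
    (f : W →ₗ[ℝ] V) (hf : Function.Injective f) {P : Set V} (hP : IsPolytope P)
    {G : Set W} (hG : IsFaceOf (f ⁻¹' P) G) (hGne : G.Nonempty) :
    ∃ F : Set V, IsFaceOf P F ∧ G = f ⁻¹' F :=
  face_of_preimage_general f hf hP hG
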